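/- arXiv:1612.06628 — 4 statements merged into one kernel-verified Lean document; each statement's English description precedes it below -/
import Mathlib

section
/- Let M be a right B-module that is Armendariz. Then the map C ↦ C·B[x] from the set of annihilators of subsets of M to the set of annihilators of subsets of the polynomial module M[x] (as right ideals of B[x]) is bijective. -/
open Polynomial MulOpposite

/-- The polynomial module `M[x]` over `Bᵐᵒᵖ[X]`, for a right `B`-module `M`
(encoded as a left `Bᵐᵒᵖ`-module). -/
noncomputable def polyModAux (B : Type*) [Ring B] (M : Type*) [AddCommGroup M]
    [Module Bᵐᵒᵖ M] : Module (Polynomial Bᵐᵒᵖ) (ℕ →₀ M) :=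
  Module.compHom _
    (Polynomial.eval₂RingHom' (Module.toAddMonoidEnd Bᵐᵒᵖ (ℕ →₀ M))
      (Finsupp.mapDomain.addMonoidHom Nat.succ : AddMonoid.End (ℕ →₀ M))
      (fun a => AddMonoidHom.ext fun p => (Finsupp.mapDomain_smul a p).symm))

/-- `M[x]` as a right `B[x]`-module, i.e. a left module over `(B[x])ᵐᵒᵖ`. -/
noncomputable def polyModOp (B : Type*) [Ring B] (M : Type*) [AddCommGroup M]
    [Module Bᵐᵒᵖ M] : Module (Polynomial B)ᵐᵒᵖ (ℕ →₀ M) :=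
  letI := polyModAux B M
  Module.compHom _ (Polynomial.opRingEquiv B).toRingHom

/-- The right action `m(x) · f(x)` of `B[x]` on the polynomial module `M[x]`. -/
noncomputable def rsmul (B : Type*) [Ring B] (M : Type*) [AddCommGroup M]
    [Module Bᵐᵒᵖ M] (p : ℕ →₀ M) (f : Polynomial B) : ℕ →₀ M := by
  letI := polyModOp B M
  exact op f • p

/-- The annihilator in `S` of a subset `X` of a right `S`-module `N`:
`ann_S(X) = {r : S | Xr = 0}`. -/
def rAnn (S : Type*) [Ring S] {N : Type*} [AddCommGroup N] [Module Sᵐᵒᵖ N]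
    (X : Set N) : Set S :=
  {r : S | ∀ x ∈ X, op r • x = 0}

/-- `C` is the right ideal `eS` generated by an idempotent `e` of `S`. -/
def IsIdempotentGenerated (S : Type*) [Ring S] (C : Set S) : Prop :=
  ∃ e : S, e * e = e ∧ C = {x : S | ∃ b : S, x = e * b}

/-- A right `B`-module `M` is Armendariz if `m(x) f(x) = 0` implies `m_i b_j = 0` for all
coefficients `m_i` of `m(x)` and `b_j` of `f(x)`. -/
def RArmendariz (B : Type*) [Ring B] (M : Type*) [AddCommGroup M] [Module Bᵐᵒᵖ M] : Prop :=
  ∀ (p : ℕ →₀ M) (f : Polynomial B), rsmul B M p f = 0 →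
    ∀ i j : ℕ, op (f.coeff j) • p i = 0

/-- The right ideal `C · B[x]` of `B[x]` generated by a subset `C` of `B`. -/
def extSet (B : Type*) [Ring B] (C : Set B) : Set (Polynomial B) :=
  (AddSubgroup.closure
    {g : Polynomial B | ∃ c ∈ C, ∃ f : Polynomial B, g = Polynomial.C c * f} : Set _)

/-!
For `V ⊆ M[x]`, the Armendariz property says exactly that `ann_{B[x]}(V)` is
`ann_B(coefficients of V) · B[x]`. Every `ann_B(U)` is `ann_B` of the coefficients of the
constant polynomials `U ⊆ M[x]`, so `C ↦ C · B[x]` lands in the annihilators of `M[x]` and is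
onto; it is injective because `ann_B(U)` is recovered as the constants in `ann_B(U) · B[x]`.
-/

attribute [local instance] polyModOp

section

variable {B : Type*} [Ring B] {M : Type*} [AddCommGroup M] [Module Bᵐᵒᵖ M]

theorem polyModOp_op_C_smul (c : B) (p : ℕ →₀ M) : op (C c) • p = op c • p := by
  let := polyModAux B M
  change (opRingEquiv B (op (C c))) • p = op c • p
  rw [opRingEquiv_op_C]
  exact congrArg (fun g : AddMonoid.End (ℕ →₀ M) => g p) (eval₂_C _ _)

theorem rAnn_mul_mem {S : Type*} [Ring S] {N : Type*} [AddCommGroup N] [Module Sᵐᵒᵖ N]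
    {X : Set N} {a : S} (ha : a ∈ rAnn S X) (b : S) : a * b ∈ rAnn S X := fun x hx => by
  rw [op_mul, mul_smul, ha x hx, smul_zero]

def rAnnAddSubgroup (S : Type*) [Ring S] {N : Type*} [AddCommGroup N] [Module Sᵐᵒᵖ N]
    (X : Set N) : AddSubgroup S where
  carrier := rAnn S X
  zero_mem' x _ := by rw [op_zero, zero_smul]
  add_mem' ha hb x hx := by rw [op_add, add_smul, ha x hx, hb x hx, add_zero]
  neg_mem' ha x hx := by rw [op_neg, neg_smul, ha x hx, neg_zero]

def coeffSet (V : Set (ℕ →₀ M)) : Set M :=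
  ⋃ p ∈ V, Set.range p

theorem mem_rAnn_coeffSet {V : Set (ℕ →₀ M)} {c : B} :
    c ∈ rAnn B (coeffSet V) ↔ ∀ p ∈ V, ∀ i, op c • p i = 0 := by
  refine ⟨fun h p hp i => h _ (Set.mem_biUnion hp ⟨i, rfl⟩), fun h m hm => ?_⟩
  obtain ⟨p, hp, i, rfl⟩ := Set.mem_iUnion₂.mp hm
  exact h p hp i

theorem C_mem_rAnn_iff {V : Set (ℕ →₀ M)} {c : B} :
    C c ∈ rAnn B[X] V ↔ c ∈ rAnn B (coeffSet V) := by
  rw [mem_rAnn_coeffSet]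
  simp [rAnn, polyModOp_op_C_smul, Finsupp.ext_iff]

theorem rAnn_coeffSet_image_single (U : Set M) :
    rAnn B (coeffSet (Finsupp.single 0 '' U)) = rAnn B U := by
  ext c
  simp only [mem_rAnn_coeffSet, Set.forall_mem_image, Finsupp.single_apply]
  refine forall₂_congr fun u _ => ⟨fun h => by simpa using h 0, fun h i => ?_⟩
  split_ifs <;> simp [h]

theorem mem_extSet_of_forall_coeff_mem {C : Set B} {f : B[X]} (h : ∀ j, f.coeff j ∈ C) :
    f ∈ extSet B C := by
  rw [f.as_sum_support_C_mul_X_pow]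
  exact AddSubgroup.sum_mem _ fun i _ => AddSubgroup.subset_closure ⟨f.coeff i, h i, X ^ i, rfl⟩

theorem extSet_rAnn_coeffSet (hArm : RArmendariz B M) (V : Set (ℕ →₀ M)) :
    extSet B (rAnn B (coeffSet V)) = rAnn B[X] V := by
  apply subset_antisymm
  · refine (AddSubgroup.closure_le (K := rAnnAddSubgroup B[X] V)).mpr ?_
    rintro _ ⟨c, hc, f, rfl⟩
    exact rAnn_mul_mem (C_mem_rAnn_iff.mpr hc) f
  · exact fun f hf => mem_extSet_of_forall_coeff_mem fun j =>
      mem_rAnn_coeffSet.mpr fun p hp i => hArm p f (hf p hp) i j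

theorem extSet_rAnn_eq_rAnn_image_single (hArm : RArmendariz B M) (U : Set M) :
    extSet B (rAnn B U) = rAnn B[X] (Finsupp.single 0 '' U) := by
  rw [← extSet_rAnn_coeffSet hArm, rAnn_coeffSet_image_single]

theorem C_mem_extSet_rAnn_iff (hArm : RArmendariz B M) {U : Set M} {c : B} :
    C c ∈ extSet B (rAnn B U) ↔ c ∈ rAnn B U := by
  rw [extSet_rAnn_eq_rAnn_image_single hArm, C_mem_rAnn_iff, rAnn_coeffSet_image_single]

end

/-- If `M` is an Armendariz right `B`-module, then the map `C ↦ C · B[x]` from annihilators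
of subsets of `M` to annihilators of subsets of `M[x]` is bijective. -/
theorem stmt11 {B : Type*} [Ring B] {M : Type*} [AddCommGroup M] [Module Bᵐᵒᵖ M]
    (hArm : RArmendariz B M) :
    letI := polyModOp B M
    ∃ ψ : {C : Set B // ∃ U : Set M, C = rAnn B U} →
        {D : Set (Polynomial B) // ∃ V : Set (ℕ →₀ M), D = rAnn (Polynomial B) V},
      Function.Bijective ψ ∧ ∀ C, (ψ C : Set (Polynomial B)) = extSet B (C : Set B) := by
  refine ⟨fun C => ⟨extSet B C, ?_⟩, ⟨?_, ?_⟩, fun _ => rfl⟩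
  · obtain ⟨U, hU⟩ := C.2
    exact ⟨_, hU ▸ extSet_rAnn_eq_rAnn_image_single hArm U⟩
  · rintro ⟨_, U₁, rfl⟩ ⟨_, U₂, rfl⟩ h
    ext c
    rw [← C_mem_extSet_rAnn_iff hArm (U := U₁), ← C_mem_extSet_rAnn_iff hArm (U := U₂)]
    exact Set.ext_iff.mp (congrArg Subtype.val h) _
  · rintro ⟨_, V, rfl⟩
    exact ⟨⟨_, _, rfl⟩, Subtype.ext (extSet_rAnn_coeffSet hArm V)⟩
end

section
/- Let B be a ring and M an Armendariz right B-module with B ⊆ M. Then M is a Baer module over B if and only if the polynomial module M[x] is a Baer module over B[x]. -/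
open Polynomial MulOpposite

/-- A right `S`-module `N` is Baer if the annihilator of every subset of `N` is generated
by an idempotent. -/
def IsBaerMod (S : Type*) [Ring S] (N : Type*) [AddCommGroup N] [Module Sᵐᵒᵖ N] : Prop :=
  ∀ X : Set N, IsIdempotentGenerated S (rAnn S X)

/-! The Armendariz property says exactly that `f ∈ B[x]` annihilates `m(x) ∈ M[x]` iff every
coefficient of `f` annihilates `m(x)` viewed in the `B`-module `M[x] = ⊕ M`. Hence the
`B[x]`-annihilator of `Y ⊆ M[x]` is the set of polynomials with coefficients in `ann_B(Y)`, and
such a set is `E·B[x]` with `E` idempotent iff `ann_B(Y) = e·B` with `e` idempotent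
(take `E = e`, resp. `e = E(0)`). Finally, `B`-annihilators of subsets of `M[x]` are the same as
those of subsets of `M`: take all coefficients, resp. constant polynomials. -/

section Annihilator

variable {S N : Type*} [Ring S] [AddCommGroup N] [Module Sᵐᵒᵖ N]

theorem rAnn_image_single {ι : Type*} (i : ι) (X : Set N) :
    rAnn S (Finsupp.single i '' X) = rAnn S X := by
  ext r
  simp [rAnn, Finsupp.smul_single]

theorem rAnn_finsupp {ι : Type*} (Y : Set (ι →₀ N)) :
    rAnn S Y = rAnn S {m | ∃ p ∈ Y, ∃ i, p i = m} := by
  ext r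
  simp only [rAnn, Set.mem_ofPred_eq, forall_exists_index, and_imp]
  constructor
  · rintro h _ p hp i rfl
    simpa using DFunLike.congr_fun (h p hp) i
  · exact fun h p hp => Finsupp.ext fun i => h _ p hp i rfl

theorem isBaerMod_finsupp_iff {ι : Type*} [Nonempty ι] :
    IsBaerMod S (ι →₀ N) ↔ IsBaerMod S N := by
  refine ⟨fun h X => ?_, fun h Y => ?_⟩
  · simpa only [rAnn_image_single] using h (Finsupp.single (Classical.arbitrary ι) '' X)
  · simpa only [rAnn_finsupp] using h _

end Annihilator

theorem isIdempotentGenerated_polynomial_iff {S : Type*} [Ring S] {I : Set S} :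
    IsIdempotentGenerated S[X] {f | ∀ j, f.coeff j ∈ I} ↔ IsIdempotentGenerated S I := by
  constructor
  · rintro ⟨E, hE, hEI⟩
    have mem_iff : ∀ f : S[X], (∀ j, f.coeff j ∈ I) ↔ ∃ g, f = E * g := fun f =>
      Set.ext_iff.mp hEI f
    have zero_mem : (0 : S) ∈ I := by simpa using (mem_iff 0).mpr ⟨0, (mul_zero E).symm⟩
    refine ⟨E.coeff 0, by rw [← mul_coeff_zero, hE], Set.ext fun b => ⟨fun hb => ?_, ?_⟩⟩
    · obtain ⟨g, hg⟩ := (mem_iff (C b)).mp fun j => by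
        rw [coeff_C]; split_ifs
        exacts [hb, zero_mem]
      exact ⟨g.coeff 0, by simpa [mul_coeff_zero] using congrArg (coeff · 0) hg⟩
    · rintro ⟨c, rfl⟩
      simpa [mul_coeff_zero] using (mem_iff (E * C c)).mpr ⟨_, rfl⟩ 0
  · rintro ⟨e, he, hI⟩
    refine ⟨C e, by rw [← C_mul, he], Set.ext fun f => ?_⟩
    simp only [hI, Set.mem_ofPred_eq]
    constructor
    · intro hf
      refine ⟨f, ext fun j => ?_⟩
      obtain ⟨b, hb⟩ := hf j
      rw [coeff_C_mul, hb, ← mul_assoc, he]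
    · rintro ⟨g, rfl⟩ j
      exact ⟨g.coeff j, coeff_C_mul g⟩

section PolynomialModule

variable {B M : Type*} [Ring B] [AddCommGroup M] [Module Bᵐᵒᵖ M]

noncomputable def mulX (M : Type*) [AddCommGroup M] : AddMonoid.End (ℕ →₀ M) :=
  Finsupp.mapDomain.addMonoidHom Nat.succ

theorem rsmul_eq_zero_of_forall_smul_eq_zero {p : ℕ →₀ M} {f : B[X]}
    (h : ∀ j, op (f.coeff j) • p = 0) : rsmul B M p f = 0 := by
  have hcomm : ∀ a : Bᵐᵒᵖ, Commute (Module.toAddMonoidEnd Bᵐᵒᵖ (ℕ →₀ M) a) (mulX M) :=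
    fun a => AddMonoidHom.ext fun p => (Finsupp.mapDomain_smul a p).symm
  show eval₂ (Module.toAddMonoidEnd Bᵐᵒᵖ (ℕ →₀ M)) (mulX M) (opRingEquiv B (op f)) p = 0
  -- `p · f = Σⱼ xʲ (p · bⱼ)`, because the action of `B` commutes with multiplication by `x`
  rw [eval₂_eq_sum, Polynomial.sum]
  refine (AddMonoidHom.finsetSum_apply _ _ _).trans (Finset.sum_eq_zero fun j _ => ?_)
  rw [((hcomm _).pow_right j).eq, coeff_opRingEquiv, unop_op]
  exact (congrArg (mulX M ^ j) (h j)).trans (map_zero _)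

theorem RArmendariz.rsmul_eq_zero_iff (hArm : RArmendariz B M) {p : ℕ →₀ M} {f : B[X]} :
    rsmul B M p f = 0 ↔ ∀ j, op (f.coeff j) • p = 0 :=
  ⟨fun h j => Finsupp.ext fun i => hArm p f h i j, rsmul_eq_zero_of_forall_smul_eq_zero⟩

theorem RArmendariz.rAnn_polynomial (hArm : RArmendariz B M) (Y : Set (ℕ →₀ M)) :
    (letI := polyModOp B M; rAnn B[X] Y) = {f | ∀ j, f.coeff j ∈ rAnn B Y} := by
  ext f
  show (∀ p ∈ Y, rsmul B M p f = 0) ↔ ∀ j, ∀ p ∈ Y, op (f.coeff j) • p = 0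
  simp only [hArm.rsmul_eq_zero_iff]
  exact ⟨fun h j p hp => h p hp j, fun h p hp j => h j p hp⟩

theorem RArmendariz.isBaerMod_polynomial_iff (hArm : RArmendariz B M) :
    (letI := polyModOp B M; IsBaerMod B[X] (ℕ →₀ M)) ↔ IsBaerMod B (ℕ →₀ M) :=
  forall_congr' fun Y => by rw [hArm.rAnn_polynomial, isIdempotentGenerated_polynomial_iff]

end PolynomialModule

theorem stmt15_general {B : Type*} [Ring B] {M : Type*} [AddCommGroup M] [Module Bᵐᵒᵖ M]
    (hArm : RArmendariz B M) :
    letI := polyModOp B M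
    (IsBaerMod B M ↔ IsBaerMod (Polynomial B) (ℕ →₀ M)) :=
  hArm.isBaerMod_polynomial_iff.trans isBaerMod_finsupp_iff |>.symm

/-- If `M` is an Armendariz right `B`-module with `B ⊆ M`, then `M` is a Baer module over
`B` if and only if `M[x]` is a Baer module over `B[x]`. -/
theorem stmt15 {B : Type*} [Ring B] {M : Type*} [AddCommGroup M] [Module Bᵐᵒᵖ M]
    (ι : B →ₗ[Bᵐᵒᵖ] M) (hι : Function.Injective ι)
    (hArm : RArmendariz B M) :
    letI := polyModOp B M
    (IsBaerMod B M ↔ IsBaerMod (Polynomial B) (ℕ →₀ M)) :=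
  stmt15_general hArm
end

section
/- Let M be a reduced right B-module and m an element of the polynomial module M[x]. If m h = 0 for some nonzero polynomial h in B[x], then there exists a nonzero element c in B such that m c = 0. -/
open Polynomial MulOpposite

/-- A right `S`-module `N` is reduced if `na = 0` implies `nS ∩ Na = 0`. -/
def RModReduced (S : Type*) [Ring S] (N : Type*) [AddCommGroup N] [Module Sᵐᵒᵖ N] : Prop :=
  ∀ (n : N) (a : S), op a • n = 0 →
    ∀ x : N, (∃ b : S, x = op b • n) → (∃ n' : N, x = op a • n') → x = 0

/-!
Let `c` be the leading coefficient of `h` and `t` its degree. The coefficient of `x^(i+t)` in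
`m h = 0`, multiplied on the right by `c`, reads `∑ j, m_(i+t-j) h_j c = 0`. Descending induction
on `i` shows `m_i c = 0`: if `m_k c = 0` for all `k > i`, reducedness gives `m_k b c = 0` for every
`b`, so only the term `m_i c c` survives, and reducedness once more turns `m_i c c = 0` into
`m_i c = 0`.
-/

namespace RModReduced

variable {S : Type*} [Ring S] {N : Type*} [AddCommGroup N] [Module Sᵐᵒᵖ N]

theorem smul_smul_eq_zero (hN : RModReduced S N) {n : N} {a : S} (hna : op a • n = 0) (b : S) :
    op a • op b • n = 0 :=
  hN n a hna _ ⟨b * a, by rw [op_mul, mul_smul]⟩ ⟨op b • n, rfl⟩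

theorem smul_eq_zero_of_smul_smul (hN : RModReduced S N) {n : N} {a : S}
    (hnaa : op a • op a • n = 0) : op a • n = 0 :=
  hN (op a • n) a hnaa _ ⟨1, by rw [op_one, one_smul]⟩ ⟨n, rfl⟩

end RModReduced

section PolyMod

variable {B : Type*} [Ring B] {M : Type*} [AddCommGroup M] [Module Bᵐᵒᵖ M]

variable (M) in
noncomputable def shiftEnd : AddMonoid.End (ℕ →₀ M) :=
  Finsupp.mapDomain.addMonoidHom Nat.succ

theorem shiftEnd_pow_apply (j : ℕ) (p : ℕ →₀ M) :
    (shiftEnd M ^ j) p = Finsupp.mapDomain (· + j) p := by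
  induction j with
  | zero => exact (Finsupp.mapDomain_id ..).symm
  | succ j ih =>
    rw [pow_succ', AddMonoid.End.coe_mul, Function.comp_apply, ih]
    exact (Finsupp.mapDomain_comp ..).symm

theorem mapDomain_add_right_apply (j n : ℕ) (p : ℕ →₀ M) :
    Finsupp.mapDomain (· + j) p n = if j ≤ n then p (n - j) else 0 := by
  split_ifs with hjn
  · conv_lhs => rw [← Nat.sub_add_cancel hjn]
    exact Finsupp.mapDomain_apply (add_left_injective j) p (n - j)
  · exact Finsupp.mapDomain_of_notMem_range _ _ fun ⟨k, hk⟩ => by simp only at hk; omega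

theorem rsmul_eq_eval₂ (p : ℕ →₀ M) (f : B[X]) :
    rsmul B M p f =
      eval₂ (Module.toAddMonoidEnd Bᵐᵒᵖ (ℕ →₀ M)) (shiftEnd M) (opRingEquiv B (op f)) p :=
  rfl

theorem rsmul_apply (p : ℕ →₀ M) (f : B[X]) (n : ℕ) :
    rsmul B M p f n = ∑ j ∈ Finset.range (n + 1), op (f.coeff j) • p (n - j) := by
  have hdeg : (opRingEquiv B (op f)).natDegree < n + 1 + f.natDegree := by
    rw [natDegree_opRingEquiv, unop_op]; omega
  have hterm (j : ℕ) : ((Module.toAddMonoidEnd Bᵐᵒᵖ (ℕ →₀ M)) ((opRingEquiv B (op f)).coeff j)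
      * shiftEnd M ^ j) p n = if j ≤ n then op (f.coeff j) • p (n - j) else 0 := by
    rw [AddMonoid.End.coe_mul, Function.comp_apply, shiftEnd_pow_apply, coeff_opRingEquiv,
      unop_op]
    change (op (f.coeff j) • _ : ℕ →₀ M) n = _
    rw [Finsupp.smul_apply, mapDomain_add_right_apply, smul_ite, smul_zero]
  have hsum (s : Finset ℕ) (g : ℕ → AddMonoid.End (ℕ →₀ M)) : (∑ j ∈ s, g j) p = ∑ j ∈ s, g j p :=
    AddMonoidHom.finsetSum_apply g s p
  rw [rsmul_eq_eval₂, eval₂_eq_sum_range' _ hdeg, hsum, Finsupp.finsetSum_apply,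
    Finset.sum_range_add]
  simp only [hterm]
  rw [Finset.sum_ite_of_true fun j hj => Finset.mem_range_succ_iff.mp hj,
    Finset.sum_ite_of_false fun j _ => by omega, Finset.sum_const_zero, add_zero]

theorem rsmul_C (p : ℕ →₀ M) (c : B) : rsmul B M p (C c) = op c • p := by
  rw [rsmul_eq_eval₂, opRingEquiv_op_C, eval₂_C]
  rfl

end PolyMod

namespace RModReduced

variable {B : Type*} [Ring B] {M : Type*} [AddCommGroup M] [Module Bᵐᵒᵖ M]

theorem smul_leadingCoeff_apply_eq_zero_of_forall_gt (hred : RModReduced B M) {p : ℕ →₀ M}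
    {h : B[X]} (hph : rsmul B M p h = 0) (i : ℕ)
    (hgt : ∀ k > i, op h.leadingCoeff • p k = 0) : op h.leadingCoeff • p i = 0 := by
  set c := h.leadingCoeff
  set t := h.natDegree
  have hcoeff : ∑ j ∈ Finset.range (i + t + 1), op c • op (h.coeff j) • p (i + t - j) = 0 := by
    rw [← Finset.smul_sum, ← rsmul_apply, hph, Finsupp.zero_apply, smul_zero]
  rw [Finset.sum_eq_single_of_mem t (Finset.mem_range.mpr (by omega)) ?_,
    Nat.add_sub_cancel] at hcoeff
  · exact hred.smul_eq_zero_of_smul_smul hcoeff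
  intro j _ hjt
  rcases hjt.lt_or_gt with hjt | hjt
  · exact hred.smul_smul_eq_zero (hgt _ (by omega)) _
  · rw [coeff_eq_zero_of_natDegree_lt hjt, op_zero, zero_smul, smul_zero]

theorem rsmul_C_leadingCoeff_eq_zero (hred : RModReduced B M) {p : ℕ →₀ M} {h : B[X]}
    (hph : rsmul B M p h = 0) : rsmul B M p (C h.leadingCoeff) = 0 := by
  obtain ⟨N, hN⟩ : ∃ N, ∀ k > N, p k = 0 :=
    ⟨p.support.sup id, fun k hk => Finsupp.notMem_support_iff.mp fun hmem =>
      (Finset.le_sup (f := id) hmem).not_gt hk⟩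
  rw [rsmul_C]
  ext i
  rw [Finsupp.smul_apply, Finsupp.zero_apply]
  exact Nat.strong_decreasing_induction ⟨N, fun k hk => by rw [hN k hk, smul_zero]⟩
    (hred.smul_leadingCoeff_apply_eq_zero_of_forall_gt hph) i

end RModReduced

/-- If `M` is a reduced right `B`-module and `m ∈ M[x]` satisfies `m h = 0` for some
nonzero `h ∈ B[x]`, then `m c = 0` for some nonzero `c ∈ B`. -/
theorem stmt16 {B : Type*} [Ring B] {M : Type*} [AddCommGroup M] [Module Bᵐᵒᵖ M]
    (hred : RModReduced B M) (p : ℕ →₀ M) (h : Polynomial B) (hh : h ≠ 0)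
    (hph : rsmul B M p h = 0) :
    ∃ c : B, c ≠ 0 ∧ rsmul B M p (Polynomial.C c) = 0 :=
  ⟨h.leadingCoeff, leadingCoeff_ne_zero.mpr hh, hred.rsmul_C_leadingCoeff_eq_zero hph⟩
end

section
/- Let B be a ring and M a right B-module. Then M is a quasi-Baer module over B if and only if the polynomial module M[x] is a quasi-Baer module over B[x]. Moreover, in this case M is quasi-Armendariz. -/
open Polynomial MulOpposite

/-- A right `B`-module `M` is quasi-Armendariz if `m(x) B[x] f(x) = 0` implies
`m_i B b_j = 0` for all coefficients `m_i` of `m(x)` and `b_j` of `f(x)`. -/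
def RQuasiArmendariz (B : Type*) [Ring B] (M : Type*) [AddCommGroup M]
    [Module Bᵐᵒᵖ M] : Prop :=
  ∀ (p : ℕ →₀ M) (f : Polynomial B),
    (∀ h : Polynomial B, rsmul B M p (h * f) = 0) →
      ∀ (i j : ℕ) (r : B), op (f.coeff j) • (op r • p i) = 0

/-- A right `S`-module `N` is quasi-Baer if the annihilator of every submodule of `N` is
generated by an idempotent. -/
def IsQuasiBaerMod (S : Type*) [Ring S] (N : Type*) [AddCommGroup N]
    [Module Sᵐᵒᵖ N] : Prop :=
  ∀ X : Submodule Sᵐᵒᵖ N, IsIdempotentGenerated S (rAnn S (X : Set N))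

/-!
If `N ≤ M` is generated by the coefficients of the members of `Y ≤ M[x]` and `ann_B(N) = eB`,
then `ann_{B[x]}(Y) = e B[x]`, provided `M` is quasi-Armendariz; conversely, from
`ann_{B[x]}(N[x]) = E B[x]` one reads off `ann_B(N) = E(0) B`.

Quasi-Armendariz follows by induction on the coefficients of `m(x)`. Let `b` be the top
coefficient, `ann(bB) = eB`, and `m(x) B f(x) = 0`. Then `g = (1 - e) f` also satisfies
`m(x) B g(x) = 0`, so the leading coefficient of `g` lies in `ann(bB) = eB` while being killed
by `e`; hence `g = 0` and `f = e f`. Since `b B e = 0`, also `(m - b x^a) B (e f) = 0`, and the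
induction hypothesis gives `m_i B e f_j = 0`.
-/

section IdempotentGenerated

variable {S : Type*} [Ring S] {C : Set S} {e : S}

theorem self_mem_of_eq_mul_right (hC : C = {x : S | ∃ b, x = e * b}) : e ∈ C :=
  hC ▸ ⟨1, (mul_one e).symm⟩

theorem mul_eq_self_of_eq_mul_right (he : e * e = e) (hC : C = {x : S | ∃ b, x = e * b})
    {c : S} (hc : c ∈ C) : e * c = c := by
  rw [hC] at hc
  obtain ⟨b, rfl⟩ := hc
  rw [← mul_assoc, he]

end IdempotentGenerated

section PolynomialModule

attribute [local instance] polyModOp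

variable {B : Type*} [Ring B] {M : Type*} [AddCommGroup M] [Module Bᵐᵒᵖ M]

theorem rsmul_eq_smul (p : ℕ →₀ M) (f : B[X]) : rsmul B M p f = op f • p := rfl

theorem op_C_smul (b : B) (p : ℕ →₀ M) : op (C b) • p = op b • p := by
  change eval₂ (Module.toAddMonoidEnd Bᵐᵒᵖ (ℕ →₀ M))
    (show AddMonoid.End (ℕ →₀ M) from Finsupp.mapDomain.addMonoidHom Nat.succ)
    (opRingEquiv B (op (C b))) p = _
  rw [opRingEquiv_op_C, eval₂_C]
  rfl

theorem op_X_smul (p : ℕ →₀ M) : op (X : B[X]) • p = Finsupp.mapDomain Nat.succ p := by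
  change eval₂ (Module.toAddMonoidEnd Bᵐᵒᵖ (ℕ →₀ M))
    (show AddMonoid.End (ℕ →₀ M) from Finsupp.mapDomain.addMonoidHom Nat.succ)
    (opRingEquiv B (op X)) p = _
  rw [opRingEquiv_op_X, eval₂_X]
  rfl

theorem op_X_pow_smul_apply (k : ℕ) (p : ℕ →₀ M) (n : ℕ) :
    (op (X ^ k : B[X]) • p) n = if k ≤ n then p (n - k) else 0 := by
  induction k generalizing n with
  | zero => simp
  | succ k ih =>
    rw [pow_succ, op_mul, mul_smul, op_X_smul]
    cases n with
    | zero => simp [Finsupp.mapDomain_of_notMem_range]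
    | succ n =>
      rw [Finsupp.mapDomain_apply Nat.succ_injective, ih]
      simp

theorem op_smul_apply (f : B[X]) (p : ℕ →₀ M) (n : ℕ) :
    (op f • p) n = ∑ j ∈ Finset.range (n + 1), op (f.coeff j) • p (n - j) := by
  induction f using Polynomial.induction_on' with
  | add f g hf hg => simp only [op_add, add_smul, Finsupp.add_apply, hf, hg, coeff_add,
      Finset.sum_add_distrib]
  | monomial k c =>
    have hterm : ∀ j, op ((monomial k c).coeff j) • p (n - j) =
        if k = j then op c • p (n - j) else 0 := by
      intro j; rw [coeff_monomial]; split_ifs <;> simp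
    rw [Finset.sum_congr rfl fun j _ => hterm j, Finset.sum_ite_eq, ← C_mul_X_pow_eq_monomial,
      op_mul, mul_smul, op_C_smul, op_X_pow_smul_apply]
    simp

theorem op_smul_apply_zero (f : B[X]) (p : ℕ →₀ M) : (op f • p) 0 = op (f.coeff 0) • p 0 := by
  simp [op_smul_apply]

theorem op_smul_apply_add_natDegree {p : ℕ →₀ M} {a : ℕ} (hp : ∀ i, a < i → p i = 0)
    (f : B[X]) : (op f • p) (a + f.natDegree) = op f.leadingCoeff • p a := by
  rw [op_smul_apply, Finset.sum_eq_single f.natDegree, Nat.add_sub_cancel, leadingCoeff]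
  · intro j _ hj
    rcases lt_or_gt_of_ne hj with hlt | hgt
    · rw [hp _ (by omega), smul_zero]
    · rw [coeff_eq_zero_of_natDegree_lt hgt, op_zero, zero_smul]
  · simp

theorem mem_rAnn_span_iff {S : Set M} {b : B} :
    b ∈ rAnn B (Submodule.span Bᵐᵒᵖ S : Set M) ↔ ∀ x ∈ S, ∀ r : B, op b • op r • x = 0 := by
  refine ⟨fun hb x hx r => hb _ (Submodule.smul_mem _ _ (Submodule.subset_span hx)), fun hb => ?_⟩
  -- `{x | x b = 0}` need not be a submodule, but `{x | x B b = 0}` is.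
  let K : Submodule Bᵐᵒᵖ M :=
    { carrier := {x | ∀ r : B, op b • op r • x = 0}
      add_mem' := fun hx hy r => by simp only [smul_add, hx r, hy r, add_zero]
      zero_mem' := fun r => by simp only [smul_zero]
      smul_mem' := fun c x hx r => by
        rw [← mul_smul (op r), ← op_unop c, ← op_mul]
        exact hx _ }
  intro x hx
  simpa using Submodule.span_le.2 (show S ⊆ K from hb) hx 1

theorem mem_rAnn_span_singleton_iff {m : M} {b : B} :
    b ∈ rAnn B (Submodule.span Bᵐᵒᵖ {m} : Set M) ↔ ∀ r : B, op b • op r • m = 0 := by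
  simp [mem_rAnn_span_iff]


theorem C_mul_smul_smul_eq_zero {f : B[X]} {p : ℕ →₀ M} (hf : ∀ r : B, op f • op r • p = 0)
    (c r : B) : op (C c * f) • op r • p = 0 := by
  rw [op_mul, mul_smul, op_C_smul, ← mul_smul, ← op_mul]
  exact hf _

theorem C_mul_eq_self_of_forall_smul_smul_eq_zero {p : ℕ →₀ M} {a : ℕ}
    (hp : ∀ i, a < i → p i = 0) {e : B} (he : e * e = e)
    (hann : rAnn B (Submodule.span Bᵐᵒᵖ {p a} : Set M) = {x : B | ∃ b, x = e * b})
    {f : B[X]} (hf : ∀ r : B, op f • op r • p = 0) : C e * f = f := by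
  set g := C (1 - e) * f with hg
  have hgf : g = f - C e * f := by rw [hg, C_sub, C_1, sub_mul, one_mul]
  have he_g : ∀ j, e * g.coeff j = 0 := fun j => by
    rw [hg, coeff_C_mul, ← mul_assoc, mul_sub, mul_one, he, sub_self, zero_mul]
  have hlc : g.leadingCoeff ∈ rAnn B (Submodule.span Bᵐᵒᵖ {p a} : Set M) := by
    refine mem_rAnn_span_singleton_iff.2 fun r => ?_
    have hpr : ∀ i, a < i → (op r • p) i = 0 := fun i hi => by
      rw [Finsupp.smul_apply, hp i hi, smul_zero]
    rw [← Finsupp.smul_apply, ← op_smul_apply_add_natDegree hpr, C_mul_smul_smul_eq_zero hf]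
    rfl
  have hg0 : g = 0 := by
    rw [← leadingCoeff_eq_zero, ← mul_eq_self_of_eq_mul_right he hann hlc]
    exact he_g _
  rw [hgf, sub_eq_zero] at hg0
  exact hg0.symm

theorem coeff_smul_smul_apply_eq_zero
    (hM : ∀ m : M, IsIdempotentGenerated B (rAnn B (Submodule.span Bᵐᵒᵖ {m} : Set M)))
    (p : ℕ →₀ M) :
    ∀ f : B[X], (∀ r : B, op f • op r • p = 0) →
      ∀ (i j : ℕ) (r : B), op (f.coeff j) • op r • p i = 0 := by
  induction p using Finsupp.induction_on_max with
  | zero => intros; simp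
  | single_add a b p hlt _ ih =>
    intro f hf
    have hpa : p a = 0 := Finsupp.notMem_support_iff.1 fun h => lt_irrefl a (hlt a h)
    obtain ⟨e, he, hann⟩ := hM b
    have hbe : ∀ r : B, op e • op r • b = 0 :=
      mem_rAnn_span_singleton_iff.1 (self_mem_of_eq_mul_right hann)
    have hfe : C e * f = f := by
      refine C_mul_eq_self_of_forall_smul_smul_eq_zero (a := a) (fun i hi => ?_) he ?_ hf
      · rw [Finsupp.add_apply, Finsupp.single_eq_of_ne hi.ne', zero_add]
        exact Finsupp.notMem_support_iff.1 fun h => (hlt i h).asymm hi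
      · simpa [hpa] using hann
    have hpf : ∀ r : B, op (C e * f) • op r • p = 0 := fun r => by
      have hb0 : op (r * e) • b = 0 := by rw [op_mul, mul_smul, hbe]
      have h := hf (r * e)
      rw [smul_add, Finsupp.smul_single, hb0, Finsupp.single_zero, zero_add] at h
      rwa [op_mul, mul_smul, op_C_smul, ← mul_smul (op e), ← op_mul]
    intro i j r
    rw [← hfe, coeff_C_mul, op_mul, mul_smul, Finsupp.add_apply]
    by_cases hi : i = a
    · rw [hi, hpa, add_zero, Finsupp.single_eq_same, hbe, smul_zero]
    · rw [Finsupp.single_eq_of_ne hi, zero_add]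
      simpa only [coeff_C_mul, op_mul, mul_smul] using ih (C e * f) hpf i j r

theorem rQuasiArmendariz_of_forall_isIdempotentGenerated
    (hM : ∀ m : M, IsIdempotentGenerated B (rAnn B (Submodule.span Bᵐᵒᵖ {m} : Set M))) :
    RQuasiArmendariz B M := by
  intro p f hp i j r
  refine coeff_smul_smul_apply_eq_zero hM p f (fun r => ?_) i j r
  rw [← op_C_smul, ← mul_smul, ← op_mul]
  exact hp (C r)

theorem IsQuasiBaerMod.rQuasiArmendariz (hM : IsQuasiBaerMod B M) : RQuasiArmendariz B M :=
  rQuasiArmendariz_of_forall_isIdempotentGenerated fun _ => hM _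

theorem IsQuasiBaerMod.polynomial (hM : IsQuasiBaerMod B M) : IsQuasiBaerMod B[X] (ℕ →₀ M) := by
  intro Y
  set N := Submodule.span Bᵐᵒᵖ {m | ∃ q ∈ Y, ∃ i, q i = m}
  obtain ⟨e, he, hann⟩ := hM N
  refine ⟨C e, by rw [← C_mul, he], Set.ext fun f => ⟨fun hf => ⟨f, ?_⟩, ?_⟩⟩
  · have hcoeff : ∀ j, f.coeff j ∈ rAnn B (N : Set M) := fun j => by
      refine mem_rAnn_span_iff.2 ?_
      rintro _ ⟨q, hq, i, rfl⟩ r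
      refine hM.rQuasiArmendariz q f (fun h => ?_) i j r
      rw [rsmul_eq_smul, op_mul, mul_smul]
      exact hf _ (Y.smul_mem _ hq)
    ext j
    rw [coeff_C_mul, mul_eq_self_of_eq_mul_right he hann (hcoeff j)]
  · rintro ⟨g, rfl⟩ q hq
    rw [op_mul, mul_smul, op_C_smul]
    have he_q : op e • q = 0 := by
      ext i
      exact self_mem_of_eq_mul_right hann _ (Submodule.subset_span ⟨q, hq, i, rfl⟩)
    rw [he_q, smul_zero]

def polySubmodule (N : Submodule Bᵐᵒᵖ M) : Submodule B[X]ᵐᵒᵖ (ℕ →₀ M) where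
  carrier := {q | ∀ i, q i ∈ N}
  add_mem' hq hq' i := N.add_mem (hq i) (hq' i)
  zero_mem' _ := N.zero_mem
  smul_mem' c q hq n := by
    rw [← op_unop c, op_smul_apply]
    exact N.sum_mem fun j _ => N.smul_mem _ (hq _)

theorem IsQuasiBaerMod.of_polynomial (h : IsQuasiBaerMod B[X] (ℕ →₀ M)) : IsQuasiBaerMod B M := by
  intro N
  obtain ⟨E, hE, hann⟩ := h (polySubmodule N)
  refine ⟨E.coeff 0, by rw [← mul_coeff_zero, hE], Set.ext fun b => ⟨fun hb => ?_, ?_⟩⟩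
  · have hCb : C b ∈ rAnn B[X] (polySubmodule N : Set (ℕ →₀ M)) := fun q hq => by
      ext i
      rw [op_C_smul]
      exact hb _ (hq i)
    obtain ⟨g, hg⟩ := hann ▸ hCb
    exact ⟨g.coeff 0, by simpa [mul_coeff_zero] using congrArg (coeff · 0) hg⟩
  · rintro ⟨c, rfl⟩ x hx
    have hx' : Finsupp.single 0 x ∈ polySubmodule N := fun i => by
      rcases eq_or_ne i 0 with rfl | hi
      · simpa using hx
      · simp [Finsupp.single_eq_of_ne hi]
    have h0 := congrArg (· 0) (self_mem_of_eq_mul_right hann _ hx')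
    simp only [op_smul_apply_zero, Finsupp.single_eq_same, Finsupp.zero_apply] at h0
    rw [op_mul, mul_smul, h0, smul_zero]

end PolynomialModule

/-- `M` is a quasi-Baer right `B`-module if and only if `M[x]` is a quasi-Baer right
`B[x]`-module; in this case `M` is quasi-Armendariz. -/
theorem stmt18 {B : Type*} [Ring B] {M : Type*} [AddCommGroup M] [Module Bᵐᵒᵖ M] :
    letI := polyModOp B M
    ((IsQuasiBaerMod B M ↔ IsQuasiBaerMod (Polynomial B) (ℕ →₀ M)) ∧
      (IsQuasiBaerMod B M → RQuasiArmendariz B M)) :=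
  ⟨⟨IsQuasiBaerMod.polynomial, IsQuasiBaerMod.of_polynomial⟩, IsQuasiBaerMod.rQuasiArmendariz⟩
end
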